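/- Suppose the hidden-state updates are deterministic: for each t with 1 ≤ t ≤ T−2 there is a measurable map F_t : H × 𝒳 → H such that h_{t+1} = F_t(h_t, X_{t+1}) μ-almost surely. If next-token consistency holds at every time t with 1 ≤ t ≤ T−1, then for every t with 1 ≤ t ≤ T−1, the hidden state h_t is a belief state for X_{1:t}. -/

import Mathlib

open MeasureTheory ProbabilityTheory

noncomputable section

/-- The tuple of tokens `(X_{s+1}, …, X_{s+n})`. -/
def tup {Ω 𝒳 : Type*} (X : ℕ → Ω → 𝒳) (s n : ℕ) (ω : Ω) : Fin n → 𝒳 :=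
  fun i => X (s + 1 + (i : ℕ)) ω

/-- Real-valued indicator of a set. -/
def ind {Ω : Type*} (A : Set Ω) : Ω → ℝ := A.indicator 1

open Filter

/-!
Backward induction on the length `k` of the future block `X_{t+1:t+k}`, `t + k = T`, for its
indicator functions; linearity then gives all functions of the block. Write the indicator as
`1{X_{t+1} = a} · Z` with `Z` an indicator of `X_{t+2:T}`. By the tower property and the induction
hypothesis, `Z` may be replaced by `E[Z | h_{t+1}] = φ(h_{t+1})`, and on `{X_{t+1} = a}` the
deterministic update turns this into `φ(F_t(h_t, a))`, a function `W` of `h_t`. Pulling `W` out,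
the conditional expectations of the product given `h_t` and given `X_{1:t}` become
`W · E[1{X_{t+1} = a} | ·]`, which agree by next-token consistency.
-/

lemma norm_ind_le_one {Ω : Type*} (A : Set Ω) (ω : Ω) : ‖ind A ω‖ ≤ 1 :=
  (norm_indicator_le_norm_self _ _).trans (by simp)

lemma ind_inter {Ω : Type*} (A B : Set Ω) : ind (A ∩ B) = ind A * ind B :=
  Set.inter_indicator_one

lemma stronglyMeasurable_ind {Ω : Type*} {m : MeasurableSpace Ω} {A : Set Ω}
    (hA : MeasurableSet A) : StronglyMeasurable (ind A) :=
  stronglyMeasurable_one.indicator hA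

lemma integrable_ind {Ω : Type*} [MeasurableSpace Ω] {μ : Measure Ω} [IsFiniteMeasure μ]
    {A : Set Ω} (hA : MeasurableSet A) : Integrable (ind A) μ :=
  (integrable_const (1 : ℝ)).indicator hA

section PullOut

variable {Ω : Type*} {m m' m₀ : MeasurableSpace Ω} {μ : Measure[m₀] Ω} [IsFiniteMeasure μ]
  {Y Z W : Ω → ℝ}

lemma condExp_mul_ae_eq_mul_condExp_of_mul_condExp_ae_eq (hm : m ≤ m') (hm' : m' ≤ m₀)
    (hY : StronglyMeasurable[m'] Y) (c : ℝ) (hYc : ∀ᵐ ω ∂μ, ‖Y ω‖ ≤ c) (hZ : Integrable Z μ)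
    (hW : StronglyMeasurable[m] W) (hYW : Y * μ[Z | m'] =ᵐ[μ] Y * W) :
    μ[Y * Z | m] =ᵐ[μ] W * μ[Y | m] := by
  have hYZ : μ[Y * Z | m'] =ᵐ[μ] Y * W :=
    (condExp_stronglyMeasurable_mul_of_bound hm' hY hZ c hYc).trans hYW
  have hWY : Integrable (W * Y) μ := mul_comm Y W ▸ integrable_condExp.congr hYZ
  calc μ[Y * Z | m] =ᵐ[μ] μ[μ[Y * Z | m'] | m] := (condExp_condExp_of_le hm hm').symm
    _ =ᵐ[μ] μ[W * Y | m] := mul_comm Y W ▸ condExp_congr_ae hYZ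
    _ =ᵐ[μ] W * μ[Y | m] := condExp_mul_of_stronglyMeasurable_left hW hWY
        (.of_bound (hY.mono hm').aestronglyMeasurable c hYc)

lemma condExp_mul_ae_eq_of_condExp_ae_eq {G F : MeasurableSpace Ω} (hGF : G ≤ F) (hFm' : F ≤ m')
    (hm' : m' ≤ m₀) (hY : StronglyMeasurable[m'] Y) (c : ℝ) (hYc : ∀ᵐ ω ∂μ, ‖Y ω‖ ≤ c)
    (hZ : Integrable Z μ) (hW : StronglyMeasurable[G] W) (hYW : Y * μ[Z | m'] =ᵐ[μ] Y * W)
    (hYGF : μ[Y | G] =ᵐ[μ] μ[Y | F]) :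
    μ[Y * Z | G] =ᵐ[μ] μ[Y * Z | F] :=
  calc μ[Y * Z | G]
      =ᵐ[μ] W * μ[Y | G] := condExp_mul_ae_eq_mul_condExp_of_mul_condExp_ae_eq
        (hGF.trans hFm') hm' hY c hYc hZ hW hYW
    _ =ᵐ[μ] W * μ[Y | F] := hYGF.mul_left
    _ =ᵐ[μ] μ[Y * Z | F] := (condExp_mul_ae_eq_mul_condExp_of_mul_condExp_ae_eq
        hFm' hm' hY c hYc hZ (hW.mono hGF) hYW).symm

end PullOut

section Update

variable {Ω H 𝒳 : Type*} [MeasurableSpace Ω] [MeasurableSpace H] [MeasurableSpace 𝒳]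
  {μ : Measure Ω}

lemma StronglyMeasurable.exists_ind_mul_ae_eq_of_update {h h' : Ω → H} {V : Ω → 𝒳}
    {F : H × 𝒳 → H} (hF : Measurable F) (hupd : ∀ᵐ ω ∂μ, h' ω = F (h ω, V ω)) {f : Ω → ℝ}
    (hf : StronglyMeasurable[MeasurableSpace.comap h' inferInstance] f) (a : 𝒳) :
    ∃ W : Ω → ℝ, StronglyMeasurable[MeasurableSpace.comap h inferInstance] W ∧
      ind {ω | V ω = a} * f =ᵐ[μ] ind {ω | V ω = a} * W := by
  obtain ⟨φ, hφ, rfl⟩ := hf.exists_eq_measurable_comp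
  refine ⟨fun ω => φ (F (h ω, a)),
    hφ.comp_measurable (hF.comp ((comap_measurable h).prodMk measurable_const)), ?_⟩
  filter_upwards [hupd] with ω hω
  by_cases hV : V ω = a <;> simp [ind, hω, hV]

end Update

section Tokens

variable {Ω 𝒳 : Type*} {X : ℕ → Ω → 𝒳}

lemma tup_succ (s n : ℕ) (ω : Ω) :
    tup X s (n + 1) ω = Fin.cons (X (s + 1) ω) (tup X (s + 1) n ω) := by
  ext i
  cases i using Fin.cases with
  | zero => rfl
  | succ j => simp only [tup, Fin.cons_succ, Fin.val_succ]; congr 1; omega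

lemma setOf_tup_succ_eq (s n : ℕ) (y : Fin (n + 1) → 𝒳) :
    {ω | tup X s (n + 1) ω = y} =
      {ω | X (s + 1) ω = y 0} ∩ {ω | tup X (s + 1) n ω = Fin.tail y} := by
  ext ω
  conv_lhs => rw [Set.mem_ofPred_eq, tup_succ, ← Fin.cons_self_tail y, Fin.cons_inj]
  rfl

variable [MeasurableSpace 𝒳]

lemma measurable_tup [MeasurableSpace Ω] (hX : ∀ t, Measurable (X t)) (s n : ℕ) :
    Measurable (tup X s n) :=
  measurable_pi_lambda _ fun _ => hX _

lemma comap_tup_le_comap_tup_succ (t : ℕ) :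
    MeasurableSpace.comap (tup X 0 t) inferInstance
      ≤ MeasurableSpace.comap (tup X 0 (t + 1)) inferInstance :=
  (measurable_pi_lambda (fun v (i : Fin t) => v i.castSucc) (fun _ => measurable_pi_apply _)
    |>.comp (comap_measurable (tup X 0 (t + 1)))).comap_le

lemma measurable_comap_tup_succ (t : ℕ) :
    Measurable[MeasurableSpace.comap (tup X 0 (t + 1)) inferInstance] (X (t + 1)) := by
  have : X (t + 1) = (fun v => v (Fin.last t)) ∘ tup X 0 (t + 1) := by
    ext ω; simp only [Function.comp_apply, tup, Fin.val_last]; congr 1; omega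
  rw [this]
  exact (measurable_pi_apply _).comp (comap_measurable _)

end Tokens

lemma condExp_comp_ae_eq_of_forall_ind {Ω α : Type*} {m₁ m₂ m₀ : MeasurableSpace Ω}
    {μ : Measure[m₀] Ω} [IsFiniteMeasure μ] [Fintype α] [MeasurableSpace α]
    [MeasurableSingletonClass α] {V : Ω → α} (hV : Measurable V)
    (hind : ∀ y, μ[ind {ω | V ω = y} | m₁] =ᵐ[μ] μ[ind {ω | V ω = y} | m₂]) (f : α → ℝ) :
    μ[fun ω => f (V ω) | m₁] =ᵐ[μ] μ[fun ω => f (V ω) | m₂] := by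
  classical
  have hsum : (fun ω => f (V ω)) = ∑ y, f y • ind {ω | V ω = y} := by
    ext ω
    simp [ind, Set.indicator_apply, eq_comm]
  have hint (y : α) : Integrable (f y • ind {ω | V ω = y}) μ :=
    (integrable_ind (hV (measurableSet_singleton y))).smul (f y)
  have hsplit (m : MeasurableSpace Ω) :
      μ[fun ω => f (V ω) | m] =ᵐ[μ] ∑ y, f y • μ[ind {ω | V ω = y} | m] :=
    hsum ▸ (condExp_finsetSum (fun y _ => hint y) m).trans
      (eventuallyEq_sum fun y _ => condExp_smul (f y) _ m)
  exact (hsplit m₁).trans <| (eventuallyEq_sum fun y _ => (hind y).const_smul (f y)).trans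
    (hsplit m₂).symm

theorem condExp_ind_tup_ae_eq_of_deterministic_updates
    {Ω 𝒳 H : Type*} [MeasurableSpace Ω] [MeasurableSpace 𝒳] [DiscreteMeasurableSpace 𝒳]
    [MeasurableSpace H] {μ : Measure Ω} [IsFiniteMeasure μ] {T : ℕ}
    {X : ℕ → Ω → 𝒳} (hX : ∀ t, Measurable (X t)) {h : ℕ → Ω → H}
    (hle : ∀ t, 1 ≤ t → t ≤ T →
      MeasurableSpace.comap (h t) inferInstance ≤ MeasurableSpace.comap (tup X 0 t) inferInstance)
    (hdet : ∀ t, 1 ≤ t → t ≤ T - 2 → ∃ F : H × 𝒳 → H, Measurable F ∧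
      ∀ᵐ ω ∂μ, h (t + 1) ω = F (h t ω, X (t + 1) ω))
    (hnext : ∀ t, 1 ≤ t → t ≤ T - 1 → ∀ a : 𝒳,
      (μ[ind {ω | X (t + 1) ω = a} | MeasurableSpace.comap (h t) inferInstance])
        =ᵐ[μ]
      (μ[ind {ω | X (t + 1) ω = a} | MeasurableSpace.comap (tup X 0 t) inferInstance]))
    {k : ℕ} (hk : 1 ≤ k) :
    ∀ t, 1 ≤ t → t + k = T → ∀ y : Fin k → 𝒳,
      μ[ind {ω | tup X t k ω = y} | MeasurableSpace.comap (h t) inferInstance]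
        =ᵐ[μ] μ[ind {ω | tup X t k ω = y} | MeasurableSpace.comap (tup X 0 t) inferInstance] := by
  induction k, hk using Nat.le_induction with
  | base =>
    intro t ht htT y
    have hnil : {ω | tup X (t + 1) 0 ω = Fin.tail y} = Set.univ :=
      Set.eq_univ_of_forall fun _ => Subsingleton.elim _ _
    rw [setOf_tup_succ_eq, hnil, Set.inter_univ]
    exact hnext t ht (by omega) (y 0)
  | succ k hk ih =>
    intro t ht htT y
    obtain ⟨F, hF, hupd⟩ := hdet t ht (by omega)
    obtain ⟨W, hW, hYW⟩ :=
      StronglyMeasurable.exists_ind_mul_ae_eq_of_update hF hupd stronglyMeasurable_condExp (y 0)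
    rw [setOf_tup_succ_eq, ind_inter]
    exact condExp_mul_ae_eq_of_condExp_ae_eq (hle t ht (by omega)) (comap_tup_le_comap_tup_succ t)
      (measurable_tup hX 0 (t + 1)).comap_le
      (stronglyMeasurable_ind (measurable_comap_tup_succ t (measurableSet_singleton _))) 1
      (.of_forall (norm_ind_le_one _))
      (integrable_ind (measurable_tup hX _ _ (measurableSet_singleton _))) hW
      ((ih (t + 1) (by omega) (by omega) _).symm.mul_left.trans hYW) (hnext t ht (by omega) _)

theorem deterministic_updates_yield_belief_states_general
    {Ω 𝒳 H : Type*}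
    [MeasurableSpace Ω] [MeasurableSpace 𝒳] [DiscreteMeasurableSpace 𝒳]
    [Fintype 𝒳]
    [MeasurableSpace H]
    (μ : Measure Ω) [IsProbabilityMeasure μ]
    (T : ℕ)
    (X : ℕ → Ω → 𝒳) (hX : ∀ t, Measurable (X t))
    (h : ℕ → Ω → H) (g : (t : ℕ) → (Fin t → 𝒳) → H)
    (hg : ∀ t, 1 ≤ t → t ≤ T → Measurable (g t))
    (hgh : ∀ t, 1 ≤ t → t ≤ T → ∀ ω, h t ω = g t (tup X 0 t ω))
    -- deterministic hidden-state updates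
    (hdet : ∀ t, 1 ≤ t → t ≤ T - 2 → ∃ F : H × 𝒳 → H, Measurable F ∧
      ∀ᵐ ω ∂μ, h (t + 1) ω = F (h t ω, X (t + 1) ω))
    -- next-token consistency at every time `1 ≤ t ≤ T-1`
    (hnext : ∀ t, 1 ≤ t → t ≤ T - 1 → ∀ a : 𝒳,
      (μ[ind {ω | X (t + 1) ω = a} | MeasurableSpace.comap (h t) inferInstance])
        =ᵐ[μ]
      (μ[ind {ω | X (t + 1) ω = a} | MeasurableSpace.comap (tup X 0 t) inferInstance])) :
    -- conclusion: `h t` is a belief state for `X_{1:t}` for every `1 ≤ t ≤ T-1`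
    ∀ t, 1 ≤ t → t ≤ T - 1 →
      ∀ f : (Fin (T - t) → 𝒳) → ℝ, Measurable f → (∃ C, ∀ y, |f y| ≤ C) →
        (μ[fun ω => f (tup X t (T - t) ω) | MeasurableSpace.comap (h t) inferInstance])
          =ᵐ[μ]
        (μ[fun ω => f (tup X t (T - t) ω) |
            MeasurableSpace.comap (tup X 0 t) inferInstance]) := by
  intro t ht htT f _ _
  have hle : ∀ t, 1 ≤ t → t ≤ T → MeasurableSpace.comap (h t) inferInstance
      ≤ MeasurableSpace.comap (tup X 0 t) inferInstance := fun t ht htT => by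
    rw [show h t = g t ∘ tup X 0 t from funext (hgh t ht htT)]
    exact ((hg t ht htT).comp (comap_measurable _)).comap_le
  exact condExp_comp_ae_eq_of_forall_ind (measurable_tup hX t (T - t))
    (condExp_ind_tup_ae_eq_of_deterministic_updates hX hle hdet hnext (k := T - t) (by omega)
      t ht (by omega)) f

/-- Suppose the hidden-state updates are deterministic: for each
`1 ≤ t ≤ T-2` there is a measurable `F_t : H × 𝒳 → H` with
`h (t+1) = F_t (h t, X (t+1))` μ-a.s. If next-token consistency holds at every time
`1 ≤ t ≤ T-1`, then for every `1 ≤ t ≤ T-1` the hidden state `h t` is a belief state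
for `X_{1:t}`. -/
theorem deterministic_updates_yield_belief_states
    {Ω 𝒳 H : Type*}
    [MeasurableSpace Ω] [MeasurableSpace 𝒳] [DiscreteMeasurableSpace 𝒳]
    [Fintype 𝒳] [Nonempty 𝒳]
    [MeasurableSpace H] [StandardBorelSpace H]
    (μ : Measure Ω) [IsProbabilityMeasure μ]
    (T : ℕ) (hT : 2 ≤ T)
    (X : ℕ → Ω → 𝒳) (hX : ∀ t, Measurable (X t))
    (h : ℕ → Ω → H) (g : (t : ℕ) → (Fin t → 𝒳) → H)
    (hg : ∀ t, 1 ≤ t → t ≤ T → Measurable (g t))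
    (hgh : ∀ t, 1 ≤ t → t ≤ T → ∀ ω, h t ω = g t (tup X 0 t ω))
    -- deterministic hidden-state updates
    (hdet : ∀ t, 1 ≤ t → t ≤ T - 2 → ∃ F : H × 𝒳 → H, Measurable F ∧
      ∀ᵐ ω ∂μ, h (t + 1) ω = F (h t ω, X (t + 1) ω))
    -- next-token consistency at every time `1 ≤ t ≤ T-1`
    (hnext : ∀ t, 1 ≤ t → t ≤ T - 1 → ∀ a : 𝒳,
      (μ[ind {ω | X (t + 1) ω = a} | MeasurableSpace.comap (h t) inferInstance])
        =ᵐ[μ]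
      (μ[ind {ω | X (t + 1) ω = a} | MeasurableSpace.comap (tup X 0 t) inferInstance])) :
    -- conclusion: `h t` is a belief state for `X_{1:t}` for every `1 ≤ t ≤ T-1`
    ∀ t, 1 ≤ t → t ≤ T - 1 →
      ∀ f : (Fin (T - t) → 𝒳) → ℝ, Measurable f → (∃ C, ∀ y, |f y| ≤ C) →
        (μ[fun ω => f (tup X t (T - t) ω) | MeasurableSpace.comap (h t) inferInstance])
          =ᵐ[μ]
        (μ[fun ω => f (tup X t (T - t) ω) |
            MeasurableSpace.comap (tup X 0 t) inferInstance]) :=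
  deterministic_updates_yield_belief_states_general μ T X hX h g hg hgh hdet hnext
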